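/- arXiv:math/0504066 — 3 statements merged into one kernel-verified Lean document; each statement's English description precedes it below -/
import Mathlib

section
/- For n ≥ 3, 0 ≤ δ < 1/(n-2), and γ = (1 + (2-n)δ)/(1+δ), the function G(x) = |x|^γ on ℝⁿ \ {0} satisfies: the symmetric matrix D²G + δ(ΔG)I has one eigenvalue equal to 0 and the remaining n-1 eigenvalues all equal to γ(2-γ)|x|^{γ-2} > 0; in particular det(D²G + δ(ΔG)I) = 0 and D²G + δ(ΔG)I is positive semidefinite. -/
/-!
At `x ≠ 0` the Hessian of `‖x‖ ^ γ` is `γ ‖x‖ ^ (γ - 2) (I + (γ - 2) e eᵀ)` with `e = x / ‖x‖`, so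
`ΔG = γ ‖x‖ ^ (γ - 2) (n + γ - 2)`. The choice of `γ` is exactly `1 + δ (n + γ - 2) = 2 - γ`, which
turns `D²G + δ (ΔG) I` into `c (I - e eᵀ)` with `c = γ (2 - γ) ‖x‖ ^ (γ - 2) > 0`, a positive multiple
of the orthogonal projection onto `x^⊥`. Such a matrix `A` satisfies `A² = c A`, so its eigenvalues
lie in `{0, c}`, and its trace `(n - 1) c` forces `c` to occur exactly `n - 1` times.
-/

open Matrix

section NormRpow

variable {E : Type*} [NormedAddCommGroup E] [InnerProductSpace ℝ E]

theorem hasStrictFDerivAt_norm_rpow_of_ne_zero {x : E} (hx : x ≠ 0) (p : ℝ) :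
    HasStrictFDerivAt (fun y : E ↦ ‖y‖ ^ p) ((p * ‖x‖ ^ (p - 2)) • innerSL ℝ x) x := by
  convert (hasStrictFDerivAt_norm_sq x).rpow_const (p := p / 2) (by simp [hx]) using 1
  · ext y
    rw [← Real.rpow_natCast_mul (norm_nonneg _)]
    ring_nf
  · simp_rw [← Real.rpow_natCast_mul (norm_nonneg _), ← Nat.cast_smul_eq_nsmul ℝ, smul_smul]
    ring_nf

theorem iteratedFDeriv_two_norm_rpow_apply {x : E} (hx : x ≠ 0) (p : ℝ) (u v : E) :
    iteratedFDeriv ℝ 2 (fun y : E ↦ ‖y‖ ^ p) x ![u, v] =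
      p * ‖x‖ ^ (p - 2) * inner ℝ u v
        + p * (p - 2) * ‖x‖ ^ (p - 4) * (inner ℝ x u * inner ℝ x v) := by
  have hfderiv : fderiv ℝ (fun y : E ↦ ‖y‖ ^ p) =ᶠ[nhds x]
      fun y ↦ (p * ‖y‖ ^ (p - 2)) • innerSL ℝ y := by
    filter_upwards [isOpen_ne.mem_nhds hx] with y hy
    exact (hasStrictFDerivAt_norm_rpow_of_ne_zero hy p).hasFDerivAt.fderiv
  have hcoeff : HasFDerivAt (fun y : E ↦ p * ‖y‖ ^ (p - 2))
      (p • ((p - 2) * ‖x‖ ^ (p - 4)) • innerSL ℝ x) x := by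
    simpa only [show p - 2 - 2 = p - 4 by ring] using
      (hasStrictFDerivAt_norm_rpow_of_ne_zero hx (p - 2)).hasFDerivAt.const_mul p
  have hsecond := hcoeff.fun_smul (innerSL ℝ (E := E)).hasFDerivAt
  rw [iteratedFDeriv_two_apply, hfderiv.fderiv_eq, hsecond.fderiv]
  simp only [Matrix.cons_val_zero, Matrix.cons_val_one, _root_.add_apply, _root_.smul_apply,
    ContinuousLinearMap.smulRight_apply, smul_eq_mul]
  -- `simp` misses these: the instances produced by `fun_smul` agree with the lemma's only up to
  -- unfolding
  rw [innerSL_apply_apply, innerSL_apply_apply, innerSL_apply_apply]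
  ring

end NormRpow

theorem EuclideanSpace.iteratedFDeriv_two_norm_rpow_single {ι : Type*} [Fintype ι]
    [DecidableEq ι] {x : EuclideanSpace ℝ ι} (hx : x ≠ 0) (p : ℝ) (i j : ι) :
    iteratedFDeriv ℝ 2 (fun y : EuclideanSpace ℝ ι ↦ ‖y‖ ^ p) x
        ![EuclideanSpace.single i 1, EuclideanSpace.single j 1] =
      ((p * ‖x‖ ^ (p - 2)) • (1 + (p - 2) • vecMulVec ⇑(‖x‖⁻¹ • x) ⇑(‖x‖⁻¹ • x))) i j := by
  have hx' : ‖x‖ ≠ 0 := norm_ne_zero_iff.mpr hx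
  have hrpow : ‖x‖ ^ (p - 4) = ‖x‖ ^ (p - 2) / ‖x‖ ^ 2 := by
    rw [show p - 4 = p - 2 - 2 by ring, Real.rpow_sub (norm_pos_iff.mpr hx), Real.rpow_two]
  rw [iteratedFDeriv_two_norm_rpow_apply hx, hrpow]
  simp only [EuclideanSpace.inner_single_right, PiLp.single_apply, Matrix.smul_apply,
    Matrix.add_apply, one_apply, vecMulVec_apply, WithLp.ofLp_smul, Pi.smul_apply, smul_eq_mul,
    conj_trivial]
  rcases eq_or_ne i j with rfl | hij
  · simp only [if_true]
    field_simp
  · simp only [if_neg hij, if_neg hij.symm]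
    field_simp

theorem EuclideanSpace.star_dotProduct_self {𝕜 ι : Type*} [RCLike 𝕜] [Fintype ι]
    (x : EuclideanSpace 𝕜 ι) : star ⇑x ⬝ᵥ ⇑x = (‖x‖ ^ 2 : ℝ) := by
  rw [dotProduct_comm, ← EuclideanSpace.inner_eq_star_dotProduct, inner_self_eq_norm_sq_to_K,
    RCLike.ofReal_pow]

theorem exists_eq_zero_and_forall_ne_eq_of_sum_eq {ι : Type*} [Fintype ι] {f : ι → ℝ}
    {c : ℝ} (hc : c ≠ 0) (hf : ∀ i, f i = 0 ∨ f i = c)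
    (hsum : ∑ i, f i = ((Fintype.card ι : ℝ) - 1) * c) :
    ∃ i₀, f i₀ = 0 ∧ ∀ i ≠ i₀, f i = c := by
  classical
  set S := Finset.univ.filter (fun i ↦ f i = c)
  have hsumS : ∑ i, f i = S.card * c := by
    rw [← Finset.sum_filter_add_sum_filter_not Finset.univ (fun i ↦ f i = c),
      Finset.sum_congr rfl fun i hi ↦ (Finset.mem_filter.mp hi).2,
      Finset.sum_eq_zero fun i hi ↦ (hf i).resolve_right (Finset.mem_filter.mp hi).2]
    simp [S]
  have hcard : S.card + 1 = Fintype.card ι := by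
    have : (S.card : ℝ) = Fintype.card ι - 1 := mul_right_cancel₀ hc (hsumS.symm.trans hsum)
    exact_mod_cast (eq_sub_iff_add_eq.mp this)
  obtain ⟨i₀, hi₀⟩ : ∃ i₀, Sᶜ = {i₀} := Finset.card_eq_one.mp (by
    rw [Finset.card_compl]; omega)
  have hmem : ∀ i, i ∉ S ↔ i = i₀ := fun i ↦ by
    rw [← Finset.mem_compl, hi₀, Finset.mem_singleton]
  refine ⟨i₀, (hf i₀).resolve_right ?_, fun i hi ↦ ?_⟩
  · simpa [S] using (hmem i₀).2 rfl
  · simpa [S] using mt (hmem i).1 hi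

namespace Matrix

variable {ι 𝕜 : Type*} [Fintype ι] [DecidableEq ι] [RCLike 𝕜]

theorem IsHermitian.eigenvalues_eq_zero_or_eq_of_mul_self_eq_smul {A : Matrix ι ι 𝕜}
    (hA : A.IsHermitian) {c : ℝ} (h : A * A = c • A) (i : ι) :
    hA.eigenvalues i = 0 ∨ hA.eigenvalues i = c := by
  set v : ι → 𝕜 := ⇑(hA.eigenvectorBasis i)
  set t := hA.eigenvalues i
  have hv : v ≠ 0 := (WithLp.ofLp_eq_zero 2).ne.2 <| hA.eigenvectorBasis.orthonormal.ne_zero i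
  have hAv : A *ᵥ v = t • v := hA.mulVec_eigenvectorBasis i
  have key : (t * t) • v = (c * t) • v := by
    calc (t * t) • v = A *ᵥ (A *ᵥ v) := by rw [hAv, mulVec_smul, hAv, smul_smul]
      _ = (c • A) *ᵥ v := by rw [mulVec_mulVec, h]
      _ = (c * t) • v := by rw [smul_mulVec, hAv, smul_smul]
  have hquad : t * (t - c) = 0 := by
    rw [mul_sub, sub_eq_zero, mul_comm t c]
    exact smul_left_injective ℝ hv key
  rcases mul_eq_zero.mp hquad with h0 | hc
  · exact .inl h0
  · exact .inr (sub_eq_zero.mp hc)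

theorem one_sub_vecMulVec_star_mul_self {e : ι → 𝕜} (he : star e ⬝ᵥ e = 1) :
    (1 - vecMulVec e (star e)) * (1 - vecMulVec e (star e)) = 1 - vecMulVec e (star e) := by
  rw [sub_mul, mul_sub, mul_sub, vecMulVec_mul_vecMulVec, he, one_smul]
  simp

theorem trace_one_sub_vecMulVec_star {e : ι → 𝕜} (he : star e ⬝ᵥ e = 1) :
    (1 - vecMulVec e (star e)).trace = Fintype.card ι - 1 := by
  rw [trace_sub, trace_one, trace_vecMulVec, dotProduct_comm, he]

theorem IsHermitian.exists_eigenvalues_smul_one_sub_vecMulVec_star {e : ι → 𝕜}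
    (he : star e ⬝ᵥ e = 1) {c : ℝ} (hc : c ≠ 0)
    (hA : (c • (1 - vecMulVec e (star e))).IsHermitian) :
    ∃ i₀, hA.eigenvalues i₀ = 0 ∧ ∀ i ≠ i₀, hA.eigenvalues i = c := by
  refine exists_eq_zero_and_forall_ne_eq_of_sum_eq hc
    (hA.eigenvalues_eq_zero_or_eq_of_mul_self_eq_smul ?_) ?_
  · rw [smul_mul_smul, one_sub_vecMulVec_star_mul_self he, smul_smul]
  · have htrace := hA.trace_eq_sum_eigenvalues
    rw [trace_smul, trace_one_sub_vecMulVec_star he] at htrace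
    apply RCLike.ofReal_injective (K := 𝕜)
    push_cast
    rw [← htrace, RCLike.real_smul_eq_coe_mul, mul_comm]

end Matrix

theorem pos_and_lt_two_of_eq_div {m δ γ : ℝ} (hδ0 : 0 ≤ δ) (hδ1 : δ < 1 / (m - 2))
    (hγ : γ = (1 + (2 - m) * δ) / (1 + δ)) : 0 < γ ∧ γ < 2 := by
  have hm : 0 < m - 2 := one_div_pos.mp (hδ0.trans_lt hδ1)
  have hδm : δ * (m - 2) < 1 := (lt_div_iff₀ hm).mp hδ1
  rw [hγ, div_pos_iff_of_pos_right (by linarith), div_lt_iff₀ (by linarith)]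
  constructor <;> nlinarith

theorem stmt_5_general (n : ℕ) (δ : ℝ) (hδ0 : 0 ≤ δ)
    (hδ1 : δ < 1 / ((n : ℝ) - 2)) (γ : ℝ)
    (hγ : γ = (1 + (2 - (n : ℝ)) * δ) / (1 + δ))
    (G : EuclideanSpace ℝ (Fin n) → ℝ) (hG : ∀ x, G x = ‖x‖ ^ γ)
    (x : EuclideanSpace ℝ (Fin n)) (hx : x ≠ 0)
    (H : Matrix (Fin n) (Fin n) ℝ)
    (hH : ∀ i j, H i j = iteratedFDeriv ℝ 2 G x
        ![EuclideanSpace.single i (1 : ℝ), EuclideanSpace.single j (1 : ℝ)])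
    (M : Matrix (Fin n) (Fin n) ℝ)
    (hM : M = H + δ • H.trace • (1 : Matrix (Fin n) (Fin n) ℝ)) :
    γ * (2 - γ) * ‖x‖ ^ (γ - 2) > 0 ∧
    (∃ hHerm : M.IsHermitian, ∃ i₀ : Fin n,
      hHerm.eigenvalues i₀ = 0 ∧
      ∀ i, i ≠ i₀ → hHerm.eigenvalues i = γ * (2 - γ) * ‖x‖ ^ (γ - 2)) ∧
    M.det = 0 ∧ M.PosSemidef := by
  obtain ⟨hγ0, hγ2⟩ := pos_and_lt_two_of_eq_div hδ0 hδ1 hγ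
  set c := γ * (2 - γ) * ‖x‖ ^ (γ - 2)
  have hc : 0 < c :=
    mul_pos (mul_pos hγ0 (sub_pos.mpr hγ2)) (Real.rpow_pos_of_pos (norm_pos_iff.mpr hx) _)
  set e : Fin n → ℝ := ⇑(‖x‖⁻¹ • x)
  have he : star e ⬝ᵥ e = 1 := by
    rw [EuclideanSpace.star_dotProduct_self]
    simp [norm_smul, hx]
  have hH' : H = (γ * ‖x‖ ^ (γ - 2)) • (1 + (γ - 2) • vecMulVec e (star e)) := by
    ext i j
    rw [hH, funext hG, EuclideanSpace.iteratedFDeriv_two_norm_rpow_single hx, star_trivial]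
  have hMc : M = c • (1 - vecMulVec e (star e)) := by
    have hrel : γ * (1 + δ) = 1 + (2 - n) * δ := by rw [hγ]; field_simp
    rw [hM, hH', trace_smul, trace_add, trace_smul, trace_vecMulVec, dotProduct_comm, he,
      trace_one, Fintype.card_fin]
    linear_combination (norm := module)
      (γ * ‖x‖ ^ (γ - 2) * hrel) • (1 : Matrix (Fin n) (Fin n) ℝ)
  subst hMc
  have hHerm := (isHermitian_one.sub (posSemidef_vecMulVec_self_star e).isHermitian).smul
    (IsSelfAdjoint.all c)
  obtain ⟨i₀, hi₀, hrest⟩ := hHerm.exists_eigenvalues_smul_one_sub_vecMulVec_star he hc.ne'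
  refine ⟨hc, ⟨hHerm, i₀, hi₀, hrest⟩, ?_, ?_⟩
  · rw [hHerm.det_eq_prod_eigenvalues]
    exact Finset.prod_eq_zero (Finset.mem_univ i₀) (by simp [hi₀])
  · refine hHerm.posSemidef_iff_eigenvalues_nonneg.mpr fun i ↦ ?_
    rcases eq_or_ne i i₀ with rfl | hi
    · exact hi₀.ge
    · exact (hrest i hi).symm ▸ hc.le

/-- For G(x)=|x|^γ with γ = (1+(2-n)δ)/(1+δ), 0 ≤ δ < 1/(n-2), the matrix
D²G + δ(ΔG)I has one eigenvalue 0 and n-1 eigenvalues γ(2-γ)|x|^{γ-2} > 0;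
in particular its determinant is 0 and it is positive semidefinite. -/
theorem stmt_5 (n : ℕ) (hn : 3 ≤ n) (δ : ℝ) (hδ0 : 0 ≤ δ)
    (hδ1 : δ < 1 / ((n : ℝ) - 2)) (γ : ℝ)
    (hγ : γ = (1 + (2 - (n : ℝ)) * δ) / (1 + δ))
    (G : EuclideanSpace ℝ (Fin n) → ℝ) (hG : ∀ x, G x = ‖x‖ ^ γ)
    (x : EuclideanSpace ℝ (Fin n)) (hx : x ≠ 0)
    (H : Matrix (Fin n) (Fin n) ℝ)
    (hH : ∀ i j, H i j = iteratedFDeriv ℝ 2 G x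
        ![EuclideanSpace.single i (1 : ℝ), EuclideanSpace.single j (1 : ℝ)])
    (M : Matrix (Fin n) (Fin n) ℝ)
    (hM : M = H + δ • H.trace • (1 : Matrix (Fin n) (Fin n) ℝ)) :
    γ * (2 - γ) * ‖x‖ ^ (γ - 2) > 0 ∧
    (∃ hHerm : M.IsHermitian, ∃ i₀ : Fin n,
      hHerm.eigenvalues i₀ = 0 ∧
      ∀ i, i ≠ i₀ → hHerm.eigenvalues i = γ * (2 - γ) * ‖x‖ ^ (γ - 2)) ∧
    M.det = 0 ∧ M.PosSemidef :=
  stmt_5_general n δ hδ0 hδ1 γ hγ G hG x hx H hH M hM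
end

section
/- Let Ω ⊂ ℝⁿ be open and v ∈ C²(Ω) be positive with ∇²v + δ(Δv)g + μ v g ≥ 0 pointwise, where g is the Euclidean metric, δ > 0, and μ > 0. Set p₀ = 2 + 1/δ. Then at every point where ∇v ≠ 0, div(|∇v|^{p₀−2}∇v) ≥ −μ(p₀−2)|∇v|^{p₀−2} v. -/
/-!
Testing the cone condition `∇²v + (δ Δv + μ v) I ≥ 0` against `∇v` gives
`∇²v(∇v, ∇v) + (δ Δv + μ v) |∇v|² ≥ 0`. Multiplying by `|∇v|^{p₀-4} / δ` and using
`p₀ - 2 = 1/δ` turns this into the claimed lower bound for the expanded divergence.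
-/

open Matrix

theorem Matrix.PosSemidef.dotProduct_mulVec_add_mul_dotProduct_nonneg {ι : Type*} [Fintype ι]
    [DecidableEq ι] {A : Matrix ι ι ℝ} {c : ℝ} (h : (A + c • 1).PosSemidef) (x : ι → ℝ) :
    0 ≤ x ⬝ᵥ A *ᵥ x + c * (x ⬝ᵥ x) := by
  simpa [add_mulVec, smul_mulVec, dotProduct_add, dotProduct_smul] using
    h.dotProduct_mulVec_nonneg x

theorem Matrix.sum_sum_mul_mul_eq_dotProduct_mulVec {ι : Type*} [Fintype ι]
    (A : Matrix ι ι ℝ) (x : ι → ℝ) :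
    ∑ i, ∑ j, A i j * x i * x j = x ⬝ᵥ A *ᵥ x := by
  simp only [dotProduct, mulVec, Finset.mul_sum]
  exact Finset.sum_congr rfl fun i _ => Finset.sum_congr rfl fun j _ => by ring

theorem EuclideanSpace.real_norm_sq_eq_dotProduct {ι : Type*} [Fintype ι]
    (x : EuclideanSpace ℝ ι) : ‖x‖ ^ 2 = ⇑x ⬝ᵥ ⇑x := by
  rw [EuclideanSpace.real_norm_sq_eq]
  simp only [dotProduct, sq]

theorem neg_mul_rpow_le_of_cone_inequality {N δ S t w p : ℝ} (hN : 0 < N) (hδ : 0 < δ)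
    (hp : p = 2 + 1 / δ) (h : 0 ≤ S + (δ * t + w) * N ^ 2) :
    -((p - 2) * N ^ (p - 2) * w) ≤ (p - 2) * N ^ (p - 4) * S + N ^ (p - 2) * t := by
  have hsplit : N ^ (p - 2) = N ^ (p - 4) * N ^ 2 := by
    rw [← Real.rpow_natCast, ← Real.rpow_add hN]
    ring_nf
  have hp2 : p - 2 = 1 / δ := by rw [hp]; ring
  rw [← sub_nonneg]
  calc (0 : ℝ) ≤ 1 / δ * N ^ (p - 4) * (S + (δ * t + w) * N ^ 2) := by positivity
    _ = _ := by rw [hsplit, hp2]; field_simp; ring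

theorem stmt_9_general (n : ℕ) (δ μ : ℝ) (hδ : 0 < δ)
    (Ω : Set (EuclideanSpace ℝ (Fin n)))
    (v : EuclideanSpace ℝ (Fin n) → ℝ)
    (H : EuclideanSpace ℝ (Fin n) → Matrix (Fin n) (Fin n) ℝ)
    (hcone : ∀ x ∈ Ω,
      (H x + δ • (H x).trace • (1 : Matrix (Fin n) (Fin n) ℝ) +
        μ • v x • (1 : Matrix (Fin n) (Fin n) ℝ)).PosSemidef)
    (p₀ : ℝ) (hp₀ : p₀ = 2 + 1 / δ) :
    ∀ x ∈ Ω, gradient v x ≠ 0 →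
      (p₀ - 2) * ‖gradient v x‖ ^ (p₀ - 4) *
          (∑ i, ∑ j, H x i j * gradient v x i * gradient v x j) +
        ‖gradient v x‖ ^ (p₀ - 2) * (H x).trace ≥
      -(μ * (p₀ - 2) * ‖gradient v x‖ ^ (p₀ - 2) * v x) := by
  intro x hx hg
  have hcone' : (H x + (δ * (H x).trace + μ * v x) • 1).PosSemidef := by
    simpa only [add_smul, smul_smul, add_assoc] using hcone x hx
  have hq := hcone'.dotProduct_mulVec_add_mul_dotProduct_nonneg (gradient v x).ofLp
  rw [← EuclideanSpace.real_norm_sq_eq_dotProduct,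
    ← sum_sum_mul_mul_eq_dotProduct_mulVec] at hq
  have key := neg_mul_rpow_le_of_cone_inequality (norm_pos_iff.mpr hg) hδ hp₀ hq
  linarith

/-- If v ∈ C²(Ω) is positive and ∇²v + δ(Δv)I + μvI ≥ 0 on Ω ⊂ ℝⁿ,
with δ, μ > 0 and p₀ = 2 + 1/δ, then at every point where ∇v ≠ 0,
div(|∇v|^{p₀−2}∇v) = (p₀−2)|∇v|^{p₀−4}∇²v(∇v,∇v) + |∇v|^{p₀−2}Δv
  ≥ −μ(p₀−2)|∇v|^{p₀−2} v. -/
theorem stmt_9 (n : ℕ) (hn : 2 ≤ n) (δ μ : ℝ) (hδ : 0 < δ) (hμ : 0 < μ)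
    (Ω : Set (EuclideanSpace ℝ (Fin n))) (hΩ : IsOpen Ω)
    (v : EuclideanSpace ℝ (Fin n) → ℝ) (hv : ContDiffOn ℝ 2 v Ω)
    (hvpos : ∀ x ∈ Ω, 0 < v x)
    (H : EuclideanSpace ℝ (Fin n) → Matrix (Fin n) (Fin n) ℝ)
    (hH : ∀ x, ∀ i j, H x i j = iteratedFDeriv ℝ 2 v x
        ![EuclideanSpace.single i (1 : ℝ), EuclideanSpace.single j (1 : ℝ)])
    (hcone : ∀ x ∈ Ω,
      (H x + δ • (H x).trace • (1 : Matrix (Fin n) (Fin n) ℝ) +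
        μ • v x • (1 : Matrix (Fin n) (Fin n) ℝ)).PosSemidef)
    (p₀ : ℝ) (hp₀ : p₀ = 2 + 1 / δ) :
    ∀ x ∈ Ω, gradient v x ≠ 0 →
      (p₀ - 2) * ‖gradient v x‖ ^ (p₀ - 4) *
          (∑ i, ∑ j, H x i j * gradient v x i * gradient v x j) +
        ‖gradient v x‖ ^ (p₀ - 2) * (H x).trace ≥
      -(μ * (p₀ - 2) * ‖gradient v x‖ ^ (p₀ - 2) * v x) :=
  stmt_9_general n δ μ hδ Ω v H hcone p₀ hp₀
end

section
/- Let n ≥ 3, 0 ≤ δ < 1/(n-2), β = (1 + (2-n)δ)/(2(1+δ)), and α = 1/β. Suppose u ∈ C²(Ω), Ω ⊂ ℝⁿ open, satisfies that the symmetric matrix ∇²u + du⊗du − ½|∇u|²I lies in the closed cone Γ̄_δ (its eigenvalue vector satisfies λᵢ ≥ −δ∑λⱼ) at each point. Then v = e^{βu} satisfies ∇²v ∈ Γ̄_δ at each point; i.e., v is δ-convex. -/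
/-!
Write `c = β e^{βu}` and `g = ∇u`. The chain rule gives
`∇²v = c (A_u + (β - 1) g ⊗ g + ½|g|² I)`, and `c ≥ 0` because `β > 0`. Read `Γ̄_δ` through the
quadratic form, `wᵀ M w ≥ -δ (tr M) |w|²`. Admissibility gives this for `A_u`. Since `β ≤ 1`,
Cauchy–Schwarz bounds the rank-one term below by `(β - 1)|g|²|w|²`. With this choice of `β`, all
the `|g|²|w|²` terms then cancel, since `(β - 1)(1 + δ) + (1 + nδ)/2 = 0`.
-/

namespace Matrix

variable {ι : Type*} [Fintype ι]

/-- Membership of a symmetric matrix in `Γ̄_δ`, stated as `λ_min(M) ≥ -δ tr M` through the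
quadratic form (see `IsHermitian.memGammaBar_iff`). -/
def MemGammaBar (δ : ℝ) (M : Matrix ι ι ℝ) : Prop :=
  ∀ w : ι → ℝ, -δ * M.trace * (w ⬝ᵥ w) ≤ w ⬝ᵥ M *ᵥ w

theorem MemGammaBar.smul {δ c : ℝ} {M : Matrix ι ι ℝ} (hM : M.MemGammaBar δ) (hc : 0 ≤ c) :
    (c • M).MemGammaBar δ := fun w ↦ by
  have := mul_le_mul_of_nonneg_left (hM w) hc
  simp only [trace_smul, smul_mulVec, dotProduct_smul, smul_eq_mul]
  linarith

theorem dotProduct_sq_le (g w : ι → ℝ) : (g ⬝ᵥ w) ^ 2 ≤ (g ⬝ᵥ g) * (w ⬝ᵥ w) := by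
  simpa only [dotProduct, sq] using Finset.sum_mul_sq_le_sq_mul_sq Finset.univ g w

variable [DecidableEq ι]

theorem MemGammaBar.add_smul_vecMulVec_add_smul_one {δ β : ℝ} {A : Matrix ι ι ℝ}
    (hA : A.MemGammaBar δ) (hδ : 0 ≤ δ)
    (hβ : β = (1 + (2 - Fintype.card ι) * δ) / (2 * (1 + δ))) (g : ι → ℝ) :
    (A + (β - 1) • vecMulVec g g + (g ⬝ᵥ g / 2) • 1).MemGammaBar δ := fun w ↦ by
  have hβ1 : (β - 1) * (2 * (1 + δ)) = -(1 + Fintype.card ι * δ) := by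
    rw [hβ]; field_simp; ring
  have hcard : (0 : ℝ) ≤ Fintype.card ι * δ := by positivity
  have hβ_le : β - 1 ≤ 0 := by nlinarith
  have hCS := dotProduct_sq_le g w
  have hAw := hA w
  simp only [trace_add, trace_smul, trace_vecMulVec, trace_one, add_mulVec, smul_mulVec,
    vecMulVec_mulVec, op_smul_eq_smul, one_mulVec, dotProduct_add, dotProduct_smul, smul_eq_mul,
    dotProduct_comm w g]
  have key : ((β - 1) * (1 + δ) + (1 + Fintype.card ι * δ) / 2) * ((g ⬝ᵥ g) * (w ⬝ᵥ w)) = 0 := by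
    linear_combination ((g ⬝ᵥ g) * (w ⬝ᵥ w) / 2) * hβ1
  linarith [mul_le_mul_of_nonpos_left hCS hβ_le]

theorem IsHermitian.posSemidef_sub_smul_one {M : Matrix ι ι ℝ} (hM : M.IsHermitian) {c : ℝ}
    (h : ∀ i, c ≤ hM.eigenvalues i) : (M - c • 1).PosSemidef := by
  have hdiag : M - c • 1 = Unitary.conjStarAlgAut ℝ _ hM.eigenvectorUnitary
      (diagonal fun i ↦ hM.eigenvalues i - c) := by
    conv_lhs => rw [hM.spectral_theorem]
    rw [show (diagonal fun i ↦ hM.eigenvalues i - c) = diagonal hM.eigenvalues - c • 1 by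
      ext i j; by_cases hij : i = j <;> simp [hij]]
    simp [map_sub, map_smul]
  rw [hdiag, Unitary.conjStarAlgAut_apply,
    IsUnit.posSemidef_star_right_conjugate_iff Unitary.isUnit_coe, posSemidef_diagonal_iff]
  exact fun i ↦ sub_nonneg.2 (h i)

theorem IsHermitian.forall_le_eigenvalues_iff {M : Matrix ι ι ℝ} (hM : M.IsHermitian) (c : ℝ) :
    (∀ i, c ≤ hM.eigenvalues i) ↔ ∀ w : ι → ℝ, c * (w ⬝ᵥ w) ≤ w ⬝ᵥ M *ᵥ w := by
  refine ⟨fun h w ↦ ?_, fun h i ↦ ?_⟩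
  · have := (hM.posSemidef_sub_smul_one h).dotProduct_mulVec_nonneg w
    simp only [star_trivial, sub_mulVec, smul_mulVec, one_mulVec, dotProduct_sub,
      dotProduct_smul, smul_eq_mul] at this
    linarith
  · have hunit : ⇑(hM.eigenvectorBasis i) ⬝ᵥ ⇑(hM.eigenvectorBasis i) = 1 := by
      simpa using (EuclideanSpace.inner_eq_star_dotProduct (hM.eigenvectorBasis i)
        (hM.eigenvectorBasis i)).symm
    simpa [hunit, hM.eigenvalues_eq i] using h (hM.eigenvectorBasis i)

theorem IsHermitian.memGammaBar_iff {δ : ℝ} {M : Matrix ι ι ℝ} (hM : M.IsHermitian) :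
    M.MemGammaBar δ ↔ ∀ i, -δ * ∑ j, hM.eigenvalues j ≤ hM.eigenvalues i := by
  rw [hM.forall_le_eigenvalues_iff, MemGammaBar]
  simp [hM.trace_eq_sum_eigenvalues]

end Matrix

open Topology Matrix

theorem one_add_two_sub_mul_pos {m δ : ℝ} (hδ0 : 0 ≤ δ) (hδ : δ < 1 / (m - 2)) :
    0 < 1 + (2 - m) * δ := by
  rcases le_or_gt (m - 2) 0 with hm | hm
  · nlinarith
  · nlinarith [(lt_div_iff₀ hm).1 hδ]

section
variable {E : Type*} [NormedAddCommGroup E] [NormedSpace ℝ E] {u : E → ℝ} {x : E}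

theorem iteratedFDeriv_two_exp_const_mul (hu : ContDiffAt ℝ 2 u x) (β : ℝ) (a b : E) :
    iteratedFDeriv ℝ 2 (fun y ↦ Real.exp (β * u y)) x ![a, b] = β * Real.exp (β * u x) *
      (iteratedFDeriv ℝ 2 u x ![a, b] + β * fderiv ℝ u x a * fderiv ℝ u x b) := by
  have hderiv : ∀ {y}, DifferentiableAt ℝ u y → HasFDerivAt (fun z ↦ Real.exp (β * u z))
      (Real.exp (β * u y) • β • fderiv ℝ u y) y :=
    fun hy ↦ (hy.hasFDerivAt.const_mul β).exp
  have hfderiv : fderiv ℝ (fun z ↦ Real.exp (β * u z)) =ᶠ[𝓝 x]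
      fun y ↦ Real.exp (β * u y) • β • fderiv ℝ u y :=
    (hu.eventually (by simp)).mono fun y hy ↦ (hderiv (hy.differentiableAt two_ne_zero)).fderiv
  have hsecond : DifferentiableAt ℝ (fderiv ℝ u) x :=
    (hu.fderiv_right (m := 1) le_rfl).differentiableAt one_ne_zero
  rw [iteratedFDeriv_two_apply, iteratedFDeriv_two_apply, hfderiv.fderiv_eq,
    ((hderiv (hu.differentiableAt two_ne_zero)).fun_smul
      (hsecond.hasFDerivAt.fun_const_smul β)).fderiv]
  simp only [cons_val_zero, cons_val_one, cons_val_fin_one, _root_.add_apply, _root_.smul_apply,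
    ContinuousLinearMap.smulRight_apply, smul_eq_mul]
  ring

theorem ContDiffAt.iteratedFDeriv_two_comm (hu : ContDiffAt ℝ 2 u x) (a b : E) :
    iteratedFDeriv ℝ 2 u x ![a, b] = iteratedFDeriv ℝ 2 u x ![b, a] := by
  simpa [iteratedFDeriv_two_apply] using hu.isSymmSndFDerivAt (by simp) a b
end

theorem EuclideanSpace.gradient_apply {ι : Type*} [Fintype ι] [DecidableEq ι]
    (f : EuclideanSpace ℝ ι → ℝ) (x : EuclideanSpace ℝ ι) (i : ι) :
    gradient f x i = fderiv ℝ f x (EuclideanSpace.single i 1) := by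
  rw [gradient, ← InnerProductSpace.toDual_symm_apply, EuclideanSpace.inner_single_right]
  simp

theorem stmt_12_general (n : ℕ) (δ : ℝ) (hδ0 : 0 ≤ δ)
    (hδ1 : δ < 1 / ((n : ℝ) - 2)) (β : ℝ)
    (hβ : β = (1 + (2 - (n : ℝ)) * δ) / (2 * (1 + δ)))
    (Ω : Set (EuclideanSpace ℝ (Fin n))) (hΩ : IsOpen Ω)
    (u : EuclideanSpace ℝ (Fin n) → ℝ) (hu : ContDiffOn ℝ 2 u Ω)
    (v : EuclideanSpace ℝ (Fin n) → ℝ) (hv : ∀ x, v x = Real.exp (β * u x))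
    (Hu Hv A : EuclideanSpace ℝ (Fin n) → Matrix (Fin n) (Fin n) ℝ)
    (hHu : ∀ x, ∀ i j, Hu x i j = iteratedFDeriv ℝ 2 u x
        ![EuclideanSpace.single i (1 : ℝ), EuclideanSpace.single j (1 : ℝ)])
    (hHv : ∀ x, ∀ i j, Hv x i j = iteratedFDeriv ℝ 2 v x
        ![EuclideanSpace.single i (1 : ℝ), EuclideanSpace.single j (1 : ℝ)])
    (hA : ∀ x, ∀ i j, A x i j = Hu x i j +
        gradient u x i * gradient u x j -
        (1 / 2) * ‖gradient u x‖ ^ 2 * (if i = j then 1 else 0))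
    (hadm : ∀ x ∈ Ω, ∀ hHerm : (A x).IsHermitian,
      ∀ i, hHerm.eigenvalues i ≥ -δ * ∑ j, hHerm.eigenvalues j) :
    ∀ x ∈ Ω, ∀ hHerm : (Hv x).IsHermitian,
      ∀ i, hHerm.eigenvalues i ≥ -δ * ∑ j, hHerm.eigenvalues j := by
  intro x hx hHerm
  have hux : ContDiffAt ℝ 2 u x := hu.contDiffAt (hΩ.mem_nhds hx)
  have hβ0 : 0 ≤ β := hβ ▸ div_nonneg (one_add_two_sub_mul_pos hδ0 hδ1).le (by positivity)
  set g : Fin n → ℝ := fun i ↦ gradient u x i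
  have hAherm : (A x).IsHermitian := by
    ext i j
    simp only [conjTranspose_apply, star_trivial, hA, hHu, hux.iteratedFDeriv_two_comm]
    by_cases hij : i = j <;> simp [hij, eq_comm, mul_comm]
  have hHv_eq : Hv x = (β * Real.exp (β * u x)) •
      (A x + (β - 1) • vecMulVec g g + (g ⬝ᵥ g / 2) • 1) := by
    have hnorm : ‖gradient u x‖ ^ 2 = g ⬝ᵥ g := by
      rw [EuclideanSpace.real_norm_sq_eq]
      simp only [dotProduct, sq, g]
    ext i j
    simp only [hHv, funext hv, iteratedFDeriv_two_exp_const_mul hux, hA, hHu, hnorm, g,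
      EuclideanSpace.gradient_apply, Matrix.smul_apply, Matrix.add_apply, vecMulVec_apply,
      one_apply, smul_eq_mul]
    ring
  have hAδ : (A x).MemGammaBar δ := hAherm.memGammaBar_iff.2 (hadm x hx hAherm)
  have hHvδ : (Hv x).MemGammaBar δ := by
    rw [hHv_eq]
    exact (hAδ.add_smul_vecMulVec_add_smul_one hδ0 (by simpa using hβ) g).smul (by positivity)
  exact hHerm.memGammaBar_iff.1 hHvδ

/-- Flat-background admissibility implies δ-convexity: if
A_u = ∇²u + du⊗du − ½|∇u|²I has eigenvalue vector in the closed cone Γ̄_δ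
at each point of Ω, 0 ≤ δ < 1/(n-2), and β = (1+(2-n)δ)/(2(1+δ)),
then v = e^{βu} has ∇²v with eigenvalue vector in Γ̄_δ at each point. -/
theorem stmt_12 (n : ℕ) (hn : 3 ≤ n) (δ : ℝ) (hδ0 : 0 ≤ δ)
    (hδ1 : δ < 1 / ((n : ℝ) - 2)) (β : ℝ)
    (hβ : β = (1 + (2 - (n : ℝ)) * δ) / (2 * (1 + δ)))
    (Ω : Set (EuclideanSpace ℝ (Fin n))) (hΩ : IsOpen Ω)
    (u : EuclideanSpace ℝ (Fin n) → ℝ) (hu : ContDiffOn ℝ 2 u Ω)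
    (v : EuclideanSpace ℝ (Fin n) → ℝ) (hv : ∀ x, v x = Real.exp (β * u x))
    (Hu Hv A : EuclideanSpace ℝ (Fin n) → Matrix (Fin n) (Fin n) ℝ)
    (hHu : ∀ x, ∀ i j, Hu x i j = iteratedFDeriv ℝ 2 u x
        ![EuclideanSpace.single i (1 : ℝ), EuclideanSpace.single j (1 : ℝ)])
    (hHv : ∀ x, ∀ i j, Hv x i j = iteratedFDeriv ℝ 2 v x
        ![EuclideanSpace.single i (1 : ℝ), EuclideanSpace.single j (1 : ℝ)])
    (hA : ∀ x, ∀ i j, A x i j = Hu x i j +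
        gradient u x i * gradient u x j -
        (1 / 2) * ‖gradient u x‖ ^ 2 * (if i = j then 1 else 0))
    (hadm : ∀ x ∈ Ω, ∀ hHerm : (A x).IsHermitian,
      ∀ i, hHerm.eigenvalues i ≥ -δ * ∑ j, hHerm.eigenvalues j) :
    ∀ x ∈ Ω, ∀ hHerm : (Hv x).IsHermitian,
      ∀ i, hHerm.eigenvalues i ≥ -δ * ∑ j, hHerm.eigenvalues j :=
  stmt_12_general n δ hδ0 hδ1 β hβ Ω hΩ u hu v hv Hu Hv A hHu hHv hA hadm
end
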